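/- arXiv:2110.02901 — 4 statements merged into one kernel-verified Lean document; each statement's English description precedes it below -/
import Mathlib

section
/- The mini-batch Bellman operator B_m is an α-contraction in the sup norm: for any J, J' : S → ℝ, max_{i ∈ S} |(B_m J)(i) − (B_m J')(i)| ≤ α · max_{i ∈ S} |J(i) − J'(i)|. -/
open Finset Filter

/-- The randomized mini-batch Bellman operator `B_m`. States are `Fin n`
(0-indexed version of `{1,…,n}`); the set `M_m(i)` of already-updated states
consists of the `j` with `(j : ℕ) < m * (i / m)` (the 0-indexed version of
`{1,…,m⌊(i-1)/m⌋}`). The operator is defined recursively in `i`. -/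
noncomputable def Bm (n m : ℕ) (U : Fin n → Finset ℕ) (hU : ∀ i, (U i).Nonempty)
    (p : Fin n → ℕ → Fin n → ℝ) (g : Fin n → ℕ → ℝ) (α : ℝ)
    (J : Fin n → ℝ) (i : Fin n) : ℝ :=
  (U i).inf' (hU i) fun u =>
    g i u
      + α * ∑ j : Fin n, (if (j : ℕ) < m * ((i : ℕ) / m) then 0 else p i u j * J j)
      + α * ∑ j : {j : Fin n // (j : ℕ) < m * ((i : ℕ) / m)},
          p i u j.1 * Bm n m U hU p g α J j.1
termination_by (i : ℕ)
decreasing_by exact lt_of_lt_of_le j.2 (Nat.mul_div_le _ _)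

/-- The standard Bellman operator `T`. -/
noncomputable def Bell (n : ℕ) (U : Fin n → Finset ℕ) (hU : ∀ i, (U i).Nonempty)
    (p : Fin n → ℕ → Fin n → ℝ) (g : Fin n → ℕ → ℝ) (α : ℝ)
    (J : Fin n → ℝ) (i : Fin n) : ℝ :=
  (U i).inf' (hU i) fun u => g i u + α * ∑ j : Fin n, p i u j * J j


lemma abs_inf'_sub_inf'_le {s : Finset ℕ} (hs : s.Nonempty) (f f' : ℕ → ℝ) (K : ℝ)
    (h : ∀ u ∈ s, |f u - f' u| ≤ K) : |s.inf' hs f - s.inf' hs f'| ≤ K := by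
  have key : ∀ (a b : ℕ → ℝ), (∀ u ∈ s, |a u - b u| ≤ K) →
      s.inf' hs a - s.inf' hs b ≤ K := by
    intro a b hab
    obtain ⟨u, hu, he⟩ := s.exists_mem_eq_inf' hs b
    rw [he]
    have h1 : s.inf' hs a ≤ a u := Finset.inf'_le _ hu
    have h2 := abs_le.1 (hab u hu)
    linarith [h2.2]
  rw [abs_le]
  refine ⟨?_, key f f' h⟩
  have := key f' f (fun u hu => by rw [abs_sub_comm]; exact h u hu)
  linarith

lemma Bm_step (n m : ℕ) (U : Fin n → Finset ℕ) (hU : ∀ i, (U i).Nonempty)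
    (p : Fin n → ℕ → Fin n → ℝ) (hp : ∀ i u j, 0 ≤ p i u j)
    (hpsum : ∀ i u, ∑ j : Fin n, p i u j = 1)
    (g : Fin n → ℕ → ℝ) (α : ℝ) (hα0 : 0 ≤ α) (hα1 : α ≤ 1)
    (J J' : Fin n → ℝ) (C : ℝ) (hC : 0 ≤ C) (hJ : ∀ j, |J j - J' j| ≤ C)
    (i : Fin n)
    (IH : ∀ j : Fin n, (j : ℕ) < (i : ℕ) →
      |Bm n m U hU p g α J j - Bm n m U hU p g α J' j| ≤ α * C) :
    |Bm n m U hU p g α J i - Bm n m U hU p g α J' i| ≤ α * C := by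
  rw [Bm, Bm]
  apply abs_inf'_sub_inf'_le
  intro u _
  set k := m * ((i : ℕ) / m) with hk
  have hdiff : (g i u
      + α * ∑ j : Fin n, (if (j : ℕ) < k then 0 else p i u j * J j)
      + α * ∑ j : {j : Fin n // (j : ℕ) < k}, p i u j.1 * Bm n m U hU p g α J j.1)
      - (g i u
      + α * ∑ j : Fin n, (if (j : ℕ) < k then 0 else p i u j * J' j)
      + α * ∑ j : {j : Fin n // (j : ℕ) < k}, p i u j.1 * Bm n m U hU p g α J' j.1)
      = α * ∑ j : Fin n, (if (j : ℕ) < k then 0 else p i u j * (J j - J' j))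
      + α * ∑ j : {j : Fin n // (j : ℕ) < k},
          p i u j.1 * (Bm n m U hU p g α J j.1 - Bm n m U hU p g α J' j.1) := by
    have e1 : ∑ j : Fin n, (if (j : ℕ) < k then 0 else p i u j * (J j - J' j))
        = ∑ j : Fin n, ((if (j : ℕ) < k then 0 else p i u j * J j)
          - (if (j : ℕ) < k then 0 else p i u j * J' j)) := by
      apply Finset.sum_congr rfl; intro j _; split <;> ring
    rw [e1, Finset.sum_sub_distrib]
    simp_rw [mul_sub]
    rw [Finset.sum_sub_distrib]
    ring
  rw [hdiff]
  have hb1 : |α * ∑ j : Fin n, (if (j : ℕ) < k then 0 else p i u j * (J j - J' j))|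
      ≤ α * ∑ j : Fin n, (if (j : ℕ) < k then 0 else p i u j * C) := by
    rw [abs_mul, abs_of_nonneg hα0]
    apply mul_le_mul_of_nonneg_left _ hα0
    calc |∑ j : Fin n, (if (j : ℕ) < k then 0 else p i u j * (J j - J' j))|
        ≤ ∑ j : Fin n, |if (j : ℕ) < k then 0 else p i u j * (J j - J' j)| :=
          Finset.abs_sum_le_sum_abs _ _
      _ ≤ ∑ j : Fin n, (if (j : ℕ) < k then 0 else p i u j * C) := by
          apply Finset.sum_le_sum; intro j _
          split
          · simp
          · rw [abs_mul, abs_of_nonneg (hp i u j)]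
            exact mul_le_mul_of_nonneg_left (hJ j) (hp i u j)
  have hb2 : |α * ∑ j : {j : Fin n // (j : ℕ) < k},
      p i u j.1 * (Bm n m U hU p g α J j.1 - Bm n m U hU p g α J' j.1)|
      ≤ α * ∑ j : {j : Fin n // (j : ℕ) < k}, p i u j.1 * C := by
    rw [abs_mul, abs_of_nonneg hα0]
    apply mul_le_mul_of_nonneg_left _ hα0
    calc |∑ j : {j : Fin n // (j : ℕ) < k},
        p i u j.1 * (Bm n m U hU p g α J j.1 - Bm n m U hU p g α J' j.1)|
        ≤ ∑ j : {j : Fin n // (j : ℕ) < k},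
          |p i u j.1 * (Bm n m U hU p g α J j.1 - Bm n m U hU p g α J' j.1)| :=
          Finset.abs_sum_le_sum_abs _ _
      _ ≤ ∑ j : {j : Fin n // (j : ℕ) < k}, p i u j.1 * C := by
          apply Finset.sum_le_sum; intro j _
          rw [abs_mul, abs_of_nonneg (hp i u j.1)]
          apply mul_le_mul_of_nonneg_left _ (hp i u j.1)
          have hji : (j.1 : ℕ) < (i : ℕ) := lt_of_lt_of_le j.2 (Nat.mul_div_le _ _)
          calc |Bm n m U hU p g α J j.1 - Bm n m U hU p g α J' j.1|
              ≤ α * C := IH j.1 hji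
            _ ≤ C := by nlinarith
  have hsub : ∑ j : {j : Fin n // (j : ℕ) < k}, p i u j.1 * C
      = ∑ j : Fin n, (if (j : ℕ) < k then p i u j * C else 0) := by
    rw [← Finset.sum_filter]
    exact (Finset.sum_subtype (Finset.univ.filter (fun j : Fin n => (j : ℕ) < k))
      (fun j => by simp) (fun j => p i u j * C)).symm
  have hsplit : ∑ j : Fin n, (if (j : ℕ) < k then 0 else p i u j * C)
      + ∑ j : Fin n, (if (j : ℕ) < k then p i u j * C else 0) = C := by
    rw [← Finset.sum_add_distrib]
    have : ∀ j : Fin n, (if (j : ℕ) < k then 0 else p i u j * C)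
        + (if (j : ℕ) < k then p i u j * C else 0) = p i u j * C := by
      intro j; split <;> ring
    simp_rw [this, ← Finset.sum_mul, hpsum i u, one_mul]
  calc |α * ∑ j : Fin n, (if (j : ℕ) < k then 0 else p i u j * (J j - J' j))
      + α * ∑ j : {j : Fin n // (j : ℕ) < k},
          p i u j.1 * (Bm n m U hU p g α J j.1 - Bm n m U hU p g α J' j.1)|
      ≤ α * ∑ j : Fin n, (if (j : ℕ) < k then 0 else p i u j * C)
        + α * ∑ j : {j : Fin n // (j : ℕ) < k}, p i u j.1 * C :=
        (abs_add_le _ _).trans (add_le_add hb1 hb2)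
    _ = α * C := by rw [hsub, ← mul_add, hsplit]
lemma Bm_aux (n m : ℕ) (U : Fin n → Finset ℕ) (hU : ∀ i, (U i).Nonempty)
    (p : Fin n → ℕ → Fin n → ℝ) (hp : ∀ i u j, 0 ≤ p i u j)
    (hpsum : ∀ i u, ∑ j : Fin n, p i u j = 1)
    (g : Fin n → ℕ → ℝ) (α : ℝ) (hα0 : 0 ≤ α) (hα1 : α ≤ 1)
    (J J' : Fin n → ℝ) (C : ℝ) (hC : 0 ≤ C) (hJ : ∀ j, |J j - J' j| ≤ C) :
    ∀ i : Fin n, |Bm n m U hU p g α J i - Bm n m U hU p g α J' i| ≤ α * C := by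
  have H : ∀ N : ℕ, ∀ i : Fin n, (i : ℕ) < N →
      |Bm n m U hU p g α J i - Bm n m U hU p g α J' i| ≤ α * C := by
    intro N
    induction N with
    | zero => exact fun i h => absurd h (Nat.not_lt_zero _)
    | succ N IHN =>
      intro i _
      exact Bm_step n m U hU p hp hpsum g α hα0 hα1 J J' C hC hJ i
        (fun j hj => IHN j (by omega))
  exact fun i => H ((i : ℕ) + 1) i (Nat.lt_succ_self _)

/-- `α`-contractivity of the mini-batch operator in the sup norm. -/
theorem Bm_contraction (n m : ℕ) (hm1 : 1 ≤ m) (hmn : m ≤ n)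
    (U : Fin n → Finset ℕ) (hU : ∀ i, (U i).Nonempty)
    (p : Fin n → ℕ → Fin n → ℝ) (hp : ∀ i u j, 0 ≤ p i u j)
    (hpsum : ∀ i u, ∑ j : Fin n, p i u j = 1)
    (g : Fin n → ℕ → ℝ) (α : ℝ) (hα0 : 0 < α) (hα1 : α < 1)
    (J J' : Fin n → ℝ) :
    (⨆ i : Fin n, |Bm n m U hU p g α J i - Bm n m U hU p g α J' i|)
      ≤ α * ⨆ i : Fin n, |J i - J' i| := by
  have hn : 0 < n := lt_of_lt_of_le hm1 hmn
  haveI : Nonempty (Fin n) := ⟨⟨0, hn⟩⟩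
  set C : ℝ := ⨆ i : Fin n, |J i - J' i| with hCdef
  have hbdd : BddAbove (Set.range fun i : Fin n => |J i - J' i|) :=
    (Set.finite_range _).bddAbove
  have hJ : ∀ j : Fin n, |J j - J' j| ≤ C := fun j => le_ciSup hbdd j
  have hC : 0 ≤ C := le_trans (abs_nonneg _) (hJ ⟨0, hn⟩)
  exact ciSup_le (Bm_aux n m U hU p hp hpsum g α hα0.le hα1.le J J' C hC hJ)
end

section
/- If J* satisfies the Bellman optimality equation, then for any initial function J : S → ℝ, the iterates B_m^k J converge pointwise (equivalently in sup norm) to J* as k → ∞. -/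
open Finset Filter

lemma sum_subtype_ite {n : ℕ} (P : Fin n → Prop) [DecidablePred P] (f : Fin n → ℝ) :
    ∑ j : {j : Fin n // P j}, f j.1 = ∑ j : Fin n, if P j then f j else 0 := by
  rw [← Finset.sum_filter]
  exact (Finset.sum_subtype _ (by simp) f).symm

lemma Bm_fixed (n m : ℕ)
    (U : Fin n → Finset ℕ) (hU : ∀ i, (U i).Nonempty)
    (p : Fin n → ℕ → Fin n → ℝ) (g : Fin n → ℕ → ℝ) (α : ℝ)
    (Jstar : Fin n → ℝ) (hfix : ∀ i, Bell n U hU p g α Jstar i = Jstar i) :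
    ∀ i, Bm n m U hU p g α Jstar i = Jstar i := by
  suffices H : ∀ N, ∀ i : Fin n, (i : ℕ) < N → Bm n m U hU p g α Jstar i = Jstar i from
    fun i => H ((i : ℕ) + 1) i (Nat.lt_succ_self _)
  intro N
  induction N with
  | zero => exact fun i hi => absurd hi (Nat.not_lt_zero _)
  | succ N IH =>
    intro i hi
    have ih : ∀ j : Fin n, (j : ℕ) < m * ((i : ℕ) / m) →
        Bm n m U hU p g α Jstar j = Jstar j := fun j hj =>
      IH j (lt_of_lt_of_le hj (le_trans (Nat.mul_div_le _ _) (Nat.lt_succ_iff.mp hi)))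
    rw [Bm, ← hfix i, Bell]
    apply Finset.inf'_congr _ rfl
    intro u _
    have h1 : ∑ j : {j : Fin n // (j : ℕ) < m * ((i : ℕ) / m)},
        p i u j.1 * Bm n m U hU p g α Jstar j.1
        = ∑ j : Fin n, if (j : ℕ) < m * ((i : ℕ) / m) then p i u j * Jstar j else 0 := by
      rw [← sum_subtype_ite (fun j : Fin n => (j : ℕ) < m * ((i : ℕ) / m))
            (fun j => p i u j * Jstar j)]
      apply Finset.sum_congr rfl
      intro j _
      rw [ih j.1 j.2]
    rw [h1, add_assoc, ← mul_add, ← Finset.sum_add_distrib]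
    congr 2
    apply Finset.sum_congr rfl
    intro j _
    by_cases h : (j : ℕ) < m * ((i : ℕ) / m) <;> simp [h]

lemma inf'_abs_sub {s : Finset ℕ} (hs : s.Nonempty) (f f' : ℕ → ℝ) (c : ℝ)
    (h : ∀ u ∈ s, |f u - f' u| ≤ c) : |s.inf' hs f - s.inf' hs f'| ≤ c := by
  rw [abs_sub_le_iff]
  constructor
  · obtain ⟨u, hu, he⟩ := s.exists_mem_eq_inf' hs f'
    calc s.inf' hs f - s.inf' hs f' ≤ f u - f' u := by
          rw [he]; exact sub_le_sub_right (Finset.inf'_le _ hu) _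
      _ ≤ |f u - f' u| := le_abs_self _
      _ ≤ c := h u hu
  · obtain ⟨u, hu, he⟩ := s.exists_mem_eq_inf' hs f
    calc s.inf' hs f' - s.inf' hs f ≤ f' u - f u := by
          rw [he]; exact sub_le_sub_right (Finset.inf'_le _ hu) _
      _ ≤ |f' u - f u| := le_abs_self _
      _ ≤ c := by rw [abs_sub_comm]; exact h u hu

lemma Bm_lipschitz (n m : ℕ) (U : Fin n → Finset ℕ) (hU : ∀ i, (U i).Nonempty)
    (p : Fin n → ℕ → Fin n → ℝ) (hp : ∀ i u j, 0 ≤ p i u j)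
    (hpsum : ∀ i u, ∑ j : Fin n, p i u j = 1)
    (g : Fin n → ℕ → ℝ) (α : ℝ) (hα0 : 0 ≤ α) (hα1 : α ≤ 1)
    (J J' : Fin n → ℝ) (C : ℝ) (hC : 0 ≤ C) (hJ : ∀ j, |J j - J' j| ≤ C) :
    ∀ i, |Bm n m U hU p g α J i - Bm n m U hU p g α J' i| ≤ α * C := by
  suffices H : ∀ N, ∀ i : Fin n, (i : ℕ) < N →
      |Bm n m U hU p g α J i - Bm n m U hU p g α J' i| ≤ α * C from
    fun i => H ((i : ℕ) + 1) i (Nat.lt_succ_self _)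
  intro N
  induction N with
  | zero => exact fun i hi => absurd hi (Nat.not_lt_zero _)
  | succ N IH =>
    intro i hi
    have ih : ∀ j : Fin n, (j : ℕ) < m * ((i : ℕ) / m) →
        |Bm n m U hU p g α J j - Bm n m U hU p g α J' j| ≤ α * C := fun j hj =>
      IH j (lt_of_lt_of_le hj (le_trans (Nat.mul_div_le _ _) (Nat.lt_succ_iff.mp hi)))
    rw [Bm, Bm]
    apply inf'_abs_sub
    intro u _
    have hkey :
        (g i u
          + α * ∑ j : Fin n, (if (j : ℕ) < m * ((i : ℕ) / m) then 0 else p i u j * J j)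
          + α * ∑ j : {j : Fin n // (j : ℕ) < m * ((i : ℕ) / m)},
              p i u j.1 * Bm n m U hU p g α J j.1)
        - (g i u
          + α * ∑ j : Fin n, (if (j : ℕ) < m * ((i : ℕ) / m) then 0 else p i u j * J' j)
          + α * ∑ j : {j : Fin n // (j : ℕ) < m * ((i : ℕ) / m)},
              p i u j.1 * Bm n m U hU p g α J' j.1)
        = α * ((∑ j : Fin n, (if (j : ℕ) < m * ((i : ℕ) / m) then 0 else p i u j * J j))
              - ∑ j : Fin n, (if (j : ℕ) < m * ((i : ℕ) / m) then 0 else p i u j * J' j))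
          + α * ((∑ j : {j : Fin n // (j : ℕ) < m * ((i : ℕ) / m)},
              p i u j.1 * Bm n m U hU p g α J j.1)
              - ∑ j : {j : Fin n // (j : ℕ) < m * ((i : ℕ) / m)},
              p i u j.1 * Bm n m U hU p g α J' j.1) := by ring
    rw [hkey]
    have b1 : |(∑ j : Fin n, (if (j : ℕ) < m * ((i : ℕ) / m) then 0 else p i u j * J j))
        - ∑ j : Fin n, (if (j : ℕ) < m * ((i : ℕ) / m) then 0 else p i u j * J' j)|
        ≤ ∑ j : Fin n, (if (j : ℕ) < m * ((i : ℕ) / m) then 0 else p i u j * C) := by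
      rw [← Finset.sum_sub_distrib]
      refine (Finset.abs_sum_le_sum_abs _ _).trans (Finset.sum_le_sum fun j _ => ?_)
      by_cases h : (j : ℕ) < m * ((i : ℕ) / m)
      · simp [h]
      · simp only [if_neg h]
        rw [← mul_sub, abs_mul, abs_of_nonneg (hp i u j)]
        exact mul_le_mul_of_nonneg_left (hJ j) (hp i u j)
    have b2 : |(∑ j : {j : Fin n // (j : ℕ) < m * ((i : ℕ) / m)},
          p i u j.1 * Bm n m U hU p g α J j.1)
          - ∑ j : {j : Fin n // (j : ℕ) < m * ((i : ℕ) / m)},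
          p i u j.1 * Bm n m U hU p g α J' j.1|
        ≤ ∑ j : {j : Fin n // (j : ℕ) < m * ((i : ℕ) / m)}, p i u j.1 * C := by
      rw [← Finset.sum_sub_distrib]
      refine (Finset.abs_sum_le_sum_abs _ _).trans (Finset.sum_le_sum fun j _ => ?_)
      rw [← mul_sub, abs_mul, abs_of_nonneg (hp i u j.1)]
      refine mul_le_mul_of_nonneg_left (le_trans (ih j.1 j.2) ?_) (hp i u j.1)
      calc α * C ≤ 1 * C := mul_le_mul_of_nonneg_right hα1 hC
        _ = C := one_mul C
    calc |α * _ + α * _| ≤ α * _ + α * _ := by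
          refine (abs_add_le _ _).trans ?_
          rw [abs_mul, abs_mul, abs_of_nonneg hα0]
      _ ≤ α * (∑ j : Fin n, (if (j : ℕ) < m * ((i : ℕ) / m) then 0 else p i u j * C))
          + α * ∑ j : {j : Fin n // (j : ℕ) < m * ((i : ℕ) / m)}, p i u j.1 * C :=
          add_le_add (mul_le_mul_of_nonneg_left b1 hα0) (mul_le_mul_of_nonneg_left b2 hα0)
      _ = α * C := by
          rw [sum_subtype_ite (fun j : Fin n => (j : ℕ) < m * ((i : ℕ) / m))
              (fun j => p i u j * C), ← mul_add, ← Finset.sum_add_distrib]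
          have : ∑ j : Fin n, ((if (j : ℕ) < m * ((i : ℕ) / m) then 0 else p i u j * C)
              + if (j : ℕ) < m * ((i : ℕ) / m) then p i u j * C else 0)
              = ∑ j : Fin n, p i u j * C := by
            refine Finset.sum_congr rfl fun j _ => ?_
            by_cases h : (j : ℕ) < m * ((i : ℕ) / m) <;> simp [h]
          rw [this, ← Finset.sum_mul, hpsum, one_mul]

/-- Convergence of mini-batch value iteration to the optimal cost `J*`. -/
theorem Bm_iterate_tendsto (n m : ℕ) (hm1 : 1 ≤ m) (hmn : m ≤ n)
    (U : Fin n → Finset ℕ) (hU : ∀ i, (U i).Nonempty)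
    (p : Fin n → ℕ → Fin n → ℝ) (hp : ∀ i u j, 0 ≤ p i u j)
    (hpsum : ∀ i u, ∑ j : Fin n, p i u j = 1)
    (g : Fin n → ℕ → ℝ) (α : ℝ) (hα0 : 0 < α) (hα1 : α < 1)
    (Jstar : Fin n → ℝ) (hfix : ∀ i, Bell n U hU p g α Jstar i = Jstar i)
    (J : Fin n → ℝ) :
    ∀ i, Tendsto (fun k => (Bm n m U hU p g α)^[k] J i) atTop (nhds (Jstar i)) := by
  have hn : 0 < n := lt_of_lt_of_le hm1 hmn
  have hne : (Finset.univ : Finset (Fin n)).Nonempty := ⟨⟨0, hn⟩, Finset.mem_univ _⟩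
  set C : ℝ := (Finset.univ : Finset (Fin n)).sup' hne (fun j => |J j - Jstar j|) with hCdef
  have hJC : ∀ j, |J j - Jstar j| ≤ C := fun j =>
    Finset.le_sup' (fun j => |J j - Jstar j|) (Finset.mem_univ j)
  have hC : 0 ≤ C := le_trans (abs_nonneg _) (hJC ⟨0, hn⟩)
  have hfixm := Bm_fixed n m U hU p g α Jstar hfix
  have bound : ∀ k j, |(Bm n m U hU p g α)^[k] J j - Jstar j| ≤ α ^ k * C := by
    intro k
    induction k with
    | zero => intro j; simpa using hJC j
    | succ k IH =>
      intro j
      rw [Function.iterate_succ_apply']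
      have := Bm_lipschitz n m U hU p hp hpsum g α hα0.le hα1.le
        ((Bm n m U hU p g α)^[k] J) Jstar (α ^ k * C)
        (mul_nonneg (pow_nonneg hα0.le _) hC) IH j
      rw [hfixm j] at this
      calc |Bm n m U hU p g α ((Bm n m U hU p g α)^[k] J) j - Jstar j|
          ≤ α * (α ^ k * C) := this
        _ = α ^ (k + 1) * C := by ring
  intro i
  have h0 : Tendsto (fun k => α ^ k * C) atTop (nhds 0) :=
    by simpa using (tendsto_pow_atTop_nhds_zero_of_lt_one hα0.le hα1).mul_const C
  have h1 : Tendsto (fun k => (Bm n m U hU p g α)^[k] J i - Jstar i) atTop (nhds 0) :=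
    squeeze_zero_norm (fun k => by rw [Real.norm_eq_abs]; exact bound k i) h0
  have h2 := h1.add_const (Jstar i)
  simpa using h2
end

section
/- For a fixed stationary policy μ, B_{μ,m} is an α-contraction in sup norm: max_i |(B_{μ,m} J)(i) − (B_{μ,m} J')(i)| ≤ α · max_i |J(i) − J'(i)| for all J, J'. -/
open Finset Filter

/-- The policy mini-batch operator `B_{μ,m}` for a stationary policy `μ`. -/
noncomputable def Bmu (n m : ℕ) (μ : Fin n → ℕ)
    (p : Fin n → ℕ → Fin n → ℝ) (g : Fin n → ℕ → ℝ) (α : ℝ)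
    (J : Fin n → ℝ) (i : Fin n) : ℝ :=
  g i (μ i)
    + α * ∑ j : Fin n, (if (j : ℕ) < m * ((i : ℕ) / m) then 0 else p i (μ i) j * J j)
    + α * ∑ j : {j : Fin n // (j : ℕ) < m * ((i : ℕ) / m)},
        p i (μ i) j.1 * Bmu n m μ p g α J j.1
termination_by (i : ℕ)
decreasing_by exact lt_of_lt_of_le j.2 (Nat.mul_div_le _ _)

/-- `α`-contractivity of the policy mini-batch operator in the sup norm. -/
theorem Bmu_contraction (n m : ℕ) (hm1 : 1 ≤ m) (hmn : m ≤ n)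
    (U : Fin n → Finset ℕ) (hU : ∀ i, (U i).Nonempty)
    (μ : Fin n → ℕ) (hμ : ∀ i, μ i ∈ U i)
    (p : Fin n → ℕ → Fin n → ℝ) (hp : ∀ i u j, 0 ≤ p i u j)
    (hpsum : ∀ i u, ∑ j : Fin n, p i u j = 1)
    (g : Fin n → ℕ → ℝ) (α : ℝ) (hα0 : 0 < α) (hα1 : α < 1)
    (J J' : Fin n → ℝ) :
    (⨆ i : Fin n, |Bmu n m μ p g α J i - Bmu n m μ p g α J' i|)
      ≤ α * ⨆ i : Fin n, |J i - J' i| := by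
  haveI : Nonempty (Fin n) := ⟨⟨0, by omega⟩⟩
  set M := ⨆ i : Fin n, |J i - J' i| with hMdef
  have hle : ∀ j : Fin n, |J j - J' j| ≤ M :=
    fun j => le_ciSup (f := fun j => |J j - J' j|) (Set.Finite.bddAbove (Set.finite_range _)) j
  have hM0 : 0 ≤ M := le_trans (abs_nonneg _) (hle (Classical.arbitrary _))
  have hsum : ∀ (i : Fin n) (c : ℕ),
      (∑ j : Fin n, (if (j : ℕ) < c then 0 else p i (μ i) j))
        + (∑ j : {j : Fin n // (j : ℕ) < c}, p i (μ i) j.1) = 1 := by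
    intro i c
    have h1 : (∑ j : Fin n, (if (j : ℕ) < c then 0 else p i (μ i) j))
        = ∑ j ∈ Finset.univ.filter (fun j : Fin n => ¬ (j : ℕ) < c), p i (μ i) j := by
      rw [Finset.sum_filter]
      exact Finset.sum_congr rfl fun j _ => by split_ifs <;> tauto
    have h2 : (∑ j : {j : Fin n // (j : ℕ) < c}, p i (μ i) j.1)
        = ∑ j ∈ Finset.univ.filter (fun j : Fin n => (j : ℕ) < c), p i (μ i) j := by
      exact (Finset.sum_subtype (p := fun j : Fin n => (j : ℕ) < c)
        (Finset.univ.filter (fun j : Fin n => (j : ℕ) < c)) (fun x => by simp)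
        (p i (μ i))).symm
    rw [h1, h2, add_comm, Finset.sum_filter_add_sum_filter_not, hpsum]
  have key : ∀ N (i : Fin n), (i : ℕ) < N →
      |Bmu n m μ p g α J i - Bmu n m μ p g α J' i| ≤ α * M := by
    intro N
    induction N with
    | zero => intro i h; omega
    | succ N ih =>
      intro i hi
      rw [Bmu, Bmu]
      have e : (g i (μ i)
          + α * ∑ j : Fin n, (if (j : ℕ) < m * ((i : ℕ) / m) then 0 else p i (μ i) j * J j)
          + α * ∑ j : {j : Fin n // (j : ℕ) < m * ((i : ℕ) / m)},
              p i (μ i) j.1 * Bmu n m μ p g α J j.1)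
        - (g i (μ i)
          + α * ∑ j : Fin n, (if (j : ℕ) < m * ((i : ℕ) / m) then 0 else p i (μ i) j * J' j)
          + α * ∑ j : {j : Fin n // (j : ℕ) < m * ((i : ℕ) / m)},
              p i (μ i) j.1 * Bmu n m μ p g α J' j.1)
        = α * (((∑ j : Fin n, (if (j : ℕ) < m * ((i : ℕ) / m) then 0 else p i (μ i) j * J j))
            - ∑ j : Fin n, (if (j : ℕ) < m * ((i : ℕ) / m) then 0 else p i (μ i) j * J' j))
          + ((∑ j : {j : Fin n // (j : ℕ) < m * ((i : ℕ) / m)},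
              p i (μ i) j.1 * Bmu n m μ p g α J j.1)
            - ∑ j : {j : Fin n // (j : ℕ) < m * ((i : ℕ) / m)},
              p i (μ i) j.1 * Bmu n m μ p g α J' j.1)) := by ring
      rw [e, abs_mul, abs_of_pos hα0]
      have hrec : ∀ j : {j : Fin n // (j : ℕ) < m * ((i : ℕ) / m)},
          |Bmu n m μ p g α J j.1 - Bmu n m μ p g α J' j.1| ≤ M := by
        intro j
        have hj : (j.1 : ℕ) < N := by
          have := lt_of_lt_of_le j.2 (Nat.mul_div_le (i : ℕ) m)
          omega
        calc |Bmu n m μ p g α J j.1 - Bmu n m μ p g α J' j.1| ≤ α * M := ih j.1 hj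
          _ ≤ 1 * M := by nlinarith
          _ = M := one_mul M
      have hbound : |((∑ j : Fin n, (if (j : ℕ) < m * ((i : ℕ) / m) then 0 else p i (μ i) j * J j))
            - ∑ j : Fin n, (if (j : ℕ) < m * ((i : ℕ) / m) then 0 else p i (μ i) j * J' j))
          + ((∑ j : {j : Fin n // (j : ℕ) < m * ((i : ℕ) / m)},
              p i (μ i) j.1 * Bmu n m μ p g α J j.1)
            - ∑ j : {j : Fin n // (j : ℕ) < m * ((i : ℕ) / m)},
              p i (μ i) j.1 * Bmu n m μ p g α J' j.1)| ≤ M := by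
        rw [← Finset.sum_sub_distrib, ← Finset.sum_sub_distrib]
        calc _ ≤ |∑ j : Fin n, ((if (j : ℕ) < m * ((i : ℕ) / m) then 0 else p i (μ i) j * J j)
                  - (if (j : ℕ) < m * ((i : ℕ) / m) then 0 else p i (μ i) j * J' j))|
                + |∑ j : {j : Fin n // (j : ℕ) < m * ((i : ℕ) / m)},
                  (p i (μ i) j.1 * Bmu n m μ p g α J j.1
                    - p i (μ i) j.1 * Bmu n m μ p g α J' j.1)| := abs_add_le _ _
          _ ≤ (∑ j : Fin n, |(if (j : ℕ) < m * ((i : ℕ) / m) then 0 else p i (μ i) j * J j)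
                  - (if (j : ℕ) < m * ((i : ℕ) / m) then 0 else p i (μ i) j * J' j)|)
              + ∑ j : {j : Fin n // (j : ℕ) < m * ((i : ℕ) / m)},
                  |p i (μ i) j.1 * Bmu n m μ p g α J j.1
                    - p i (μ i) j.1 * Bmu n m μ p g α J' j.1| :=
            add_le_add (Finset.abs_sum_le_sum_abs _ _) (Finset.abs_sum_le_sum_abs _ _)
          _ ≤ (∑ j : Fin n, (if (j : ℕ) < m * ((i : ℕ) / m) then 0 else p i (μ i) j) * M)
              + ∑ j : {j : Fin n // (j : ℕ) < m * ((i : ℕ) / m)}, p i (μ i) j.1 * M := by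
            apply add_le_add
            · apply Finset.sum_le_sum
              intro j _
              split_ifs with h
              · simp
              · rw [← mul_sub, abs_mul, abs_of_nonneg (hp i (μ i) j)]
                exact mul_le_mul_of_nonneg_left (hle j) (hp i (μ i) j)
            · apply Finset.sum_le_sum
              intro j _
              rw [← mul_sub, abs_mul, abs_of_nonneg (hp i (μ i) j.1)]
              exact mul_le_mul_of_nonneg_left (hrec j) (hp i (μ i) j.1)
          _ = ((∑ j : Fin n, (if (j : ℕ) < m * ((i : ℕ) / m) then 0 else p i (μ i) j))
              + ∑ j : {j : Fin n // (j : ℕ) < m * ((i : ℕ) / m)}, p i (μ i) j.1) * M := by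
            rw [add_mul, Finset.sum_mul, Finset.sum_mul]
          _ = M := by rw [hsum i, one_mul]
      exact mul_le_mul_of_nonneg_left hbound (le_of_lt hα0)
  exact ciSup_le fun i => key n i i.2
end

section
/- Sandwich corollary: if J satisfies J ≤ TJ ≤ J* pointwise, then for every batch-size 1 ≤ m ≤ n and every k ≥ 1, (T^k J)(i) ≤ (B_m^k J)(i) ≤ (F^k J)(i) ≤ J*(i) for all i, where T is the Bellman operator (m = n) and F is the Gauss-Seidel operator (m = 1). -/
/-!
All three operators are sweeps of the Bellman operator `T`: at state `i` they apply `T` to the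
vector that agrees with the output already computed on a set `M i` of earlier states and with the
input elsewhere (`M i = ∅` for `T`, `{j < m⌊i/m⌋}` for `B_m`, `{j < i}` for `F`). For monotone `T`,
strong induction along the states shows that a sweep maps a subsolution `J ≤ TJ` to a subsolution
above `TJ`, that enlarging the sets `M i` can only increase the output on subsolutions, and that a
sweep stays below any supersolution `TJ' ≤ J'` lying above its input. Iterating these facts gives
the three inequalities, the last one with `J' = J*`.
-/

open Finset Filter

/-- The Gauss-Seidel operator `F`. -/
noncomputable def GS (n : ℕ) (U : Fin n → Finset ℕ) (hU : ∀ i, (U i).Nonempty)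
    (p : Fin n → ℕ → Fin n → ℝ) (g : Fin n → ℕ → ℝ) (α : ℝ)
    (J : Fin n → ℝ) (i : Fin n) : ℝ :=
  (U i).inf' (hU i) fun u =>
    g i u
      + α * ∑ j : {j : Fin n // (j : ℕ) < (i : ℕ)}, p i u j.1 * GS n U hU p g α J j.1
      + α * ∑ j : Fin n, (if (j : ℕ) < (i : ℕ) then 0 else p i u j * J j)
termination_by (i : ℕ)
decreasing_by exact j.2

section Sweep

variable {ι β : Type*} [Preorder ι]

open scoped Classical

structure IsSweep (T W : (ι → β) → ι → β) (M : ι → Set ι) : Prop where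
  subset_Iio : ∀ i, M i ⊆ Set.Iio i
  apply_eq : ∀ J i, W J i = T ((M i).piecewise (W J) J) i

theorem isSweep_self (T : (ι → β) → ι → β) : IsSweep T T fun _ => ∅ where
  subset_Iio _ := Set.empty_subset _
  apply_eq J i := by rw [Set.piecewise_empty]

variable [WellFoundedLT ι] [Preorder β]

namespace IsSweep

variable {T W W₁ W₂ : (ι → β) → ι → β} {M M₁ M₂ : ι → Set ι} {J J' : ι → β}

theorem apply_le (hW : IsSweep T W M) (hT : Monotone T) (hJ : J ≤ T J) : T J ≤ W J := by
  intro i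
  induction i using WellFoundedLT.induction with
  | ind i ih =>
    rw [hW.apply_eq]
    refine hT (Set.le_piecewise (fun j hj => ?_) fun _ _ => le_rfl) i
    exact (hJ j).trans (ih j (hW.subset_Iio i hj))

theorem le_apply_of_le_apply (hW : IsSweep T W M) (hT : Monotone T) (hJ : J ≤ T J) :
    W J ≤ T (W J) := fun i => by
  rw [hW.apply_eq]
  exact hT (Set.piecewise_le (fun _ _ => le_rfl) fun j _ => (hJ j).trans (hW.apply_le hT hJ j)) i

theorem apply_le_apply (hW₁ : IsSweep T W₁ M₁) (hW₂ : IsSweep T W₂ M₂) (hM : ∀ i, M₁ i ⊆ M₂ i)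
    (hT : Monotone T) (hJJ' : J ≤ J') (hJ' : J' ≤ T J') : W₁ J ≤ W₂ J' := by
  intro i
  induction i using WellFoundedLT.induction with
  | ind i ih =>
    rw [hW₁.apply_eq, hW₂.apply_eq]
    refine hT (fun j => ?_) i
    by_cases hj₁ : j ∈ M₁ i
    · rw [Set.piecewise_eq_of_mem _ _ _ hj₁, Set.piecewise_eq_of_mem _ _ _ (hM i hj₁)]
      exact ih j (hW₁.subset_Iio i hj₁)
    rw [Set.piecewise_eq_of_notMem _ _ _ hj₁]
    by_cases hj₂ : j ∈ M₂ i
    · rw [Set.piecewise_eq_of_mem _ _ _ hj₂]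
      exact ((hJJ' j).trans (hJ' j)).trans (hW₂.apply_le hT hJ' j)
    · rw [Set.piecewise_eq_of_notMem _ _ _ hj₂]
      exact hJJ' j

theorem apply_le_of_le (hW : IsSweep T W M) (hT : Monotone T) (hJJ' : J ≤ J') (hJ' : T J' ≤ J') :
    W J ≤ J' := by
  intro i
  induction i using WellFoundedLT.induction with
  | ind i ih =>
    rw [hW.apply_eq]
    exact (hT (Set.piecewise_le (fun j hj => ih j (hW.subset_Iio i hj)) fun j _ => hJJ' j) i).trans
      (hJ' i)

theorem iterate_le_apply_iterate (hW : IsSweep T W M) (hT : Monotone T) (hJ : J ≤ T J) (k : ℕ) :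
    W^[k] J ≤ T (W^[k] J) := by
  induction k with
  | zero => exact hJ
  | succ k ih =>
    rw [Function.iterate_succ_apply']
    exact hW.le_apply_of_le_apply hT ih

theorem iterate_le_iterate (hW₁ : IsSweep T W₁ M₁) (hW₂ : IsSweep T W₂ M₂)
    (hM : ∀ i, M₁ i ⊆ M₂ i) (hT : Monotone T) (hJ : J ≤ T J) (k : ℕ) :
    W₁^[k] J ≤ W₂^[k] J := by
  induction k with
  | zero => exact le_rfl
  | succ k ih =>
    rw [Function.iterate_succ_apply', Function.iterate_succ_apply']
    exact hW₁.apply_le_apply hW₂ hM hT ih (hW₂.iterate_le_apply_iterate hT hJ k)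

theorem iterate_le (hW : IsSweep T W M) (hT : Monotone T) (hJJ' : J ≤ J') (hJ' : T J' ≤ J')
    (k : ℕ) : W^[k] J ≤ J' := by
  induction k with
  | zero => exact hJJ'
  | succ k ih =>
    rw [Function.iterate_succ_apply']
    exact hW.apply_le_of_le hT ih hJ'

end IsSweep

end Sweep

theorem sum_ite_zero_add_sum_subtype {ι M : Type*} [Fintype ι] [AddCommMonoid M] (q : ι → Prop)
    [DecidablePred q] (f g : ι → M) :
    (∑ j, if q j then 0 else f j) + ∑ j : {j // q j}, g j = ∑ j, if q j then g j else f j := by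
  rw [← Fintype.sum_subtype_add_sum_subtype q fun j => if q j then g j else f j,
    ← Fintype.sum_subtype_add_sum_subtype q fun j => if q j then 0 else f j, add_comm]
  simp only [Subtype.prop, if_true, sum_const_zero, zero_add]
  exact congrArg _ (Fintype.sum_congr _ _ fun j => by rw [if_neg j.2, if_neg j.2])

section Bellman

variable {n m : ℕ} {U : Fin n → Finset ℕ} {hU : ∀ i, (U i).Nonempty}
  {p : Fin n → ℕ → Fin n → ℝ} {g : Fin n → ℕ → ℝ} {α : ℝ}

theorem Bell_monotone (hp : ∀ i u j, 0 ≤ p i u j) (hα : 0 ≤ α) :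
    Monotone (Bell n U hU p g α) := by
  intro J J' h i
  unfold Bell
  gcongr with u _ j
  · exact hp i u j
  · exact h j

theorem Bell_piecewise (q : Fin n → Prop) [DecidablePred q] [∀ j, Decidable (j ∈ {j | q j})]
    (V J : Fin n → ℝ) (i : Fin n) :
    Bell n U hU p g α ({j | q j}.piecewise V J) i = (U i).inf' (hU i) fun u =>
      g i u + α * ∑ j, (if q j then 0 else p i u j * J j)
        + α * ∑ j : {j // q j}, p i u j.1 * V j.1 := by
  refine congrArg _ (funext fun u => ?_)
  rw [add_assoc, ← mul_add, sum_ite_zero_add_sum_subtype q (fun j => p i u j * J j)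
    (fun j => p i u j * V j)]
  simp only [Set.piecewise, mul_ite]
  congr!

theorem isSweep_Bm :
    IsSweep (Bell n U hU p g α) (Bm n m U hU p g α) fun i => {j | (j : ℕ) < m * (i / m)} where
  subset_Iio i _ hj := lt_of_lt_of_le hj (Nat.mul_div_le _ _)
  apply_eq J i := by rw [Bm, Bell_piecewise]

theorem isSweep_GS : IsSweep (Bell n U hU p g α) (GS n U hU p g α) fun i => {j | (j : ℕ) < i} where
  subset_Iio _ _ hj := hj
  apply_eq J i := by
    rw [GS, Bell_piecewise]
    simp only [add_right_comm]

end Bellman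

theorem Bm_sandwich_general (n m : ℕ)
    (U : Fin n → Finset ℕ) (hU : ∀ i, (U i).Nonempty)
    (p : Fin n → ℕ → Fin n → ℝ) (hp : ∀ i u j, 0 ≤ p i u j)
    (g : Fin n → ℕ → ℝ) (α : ℝ) (hα0 : 0 < α)
    (Jstar : Fin n → ℝ) (hfix : ∀ i, Bell n U hU p g α Jstar i = Jstar i)
    (J : Fin n → ℝ)
    (hJ1 : ∀ i, J i ≤ Bell n U hU p g α J i)
    (hJ2 : ∀ i, Bell n U hU p g α J i ≤ Jstar i)
    (k : ℕ) :
    ∀ i, (Bell n U hU p g α)^[k] J i ≤ (Bm n m U hU p g α)^[k] J i ∧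
      (Bm n m U hU p g α)^[k] J i ≤ (GS n U hU p g α)^[k] J i ∧
      (GS n U hU p g α)^[k] J i ≤ Jstar i := by
  have hT := Bell_monotone (U := U) (hU := hU) (g := g) hp hα0.le
  have hBm_GS (i : Fin n) : {j : Fin n | (j : ℕ) < m * (i / m)} ⊆ {j | (j : ℕ) < i} :=
    fun _ hj => lt_of_lt_of_le hj (Nat.mul_div_le _ _)
  intro i
  exact ⟨(isSweep_self _).iterate_le_iterate isSweep_Bm (fun _ => Set.empty_subset _) hT hJ1 k i,
    isSweep_Bm.iterate_le_iterate isSweep_GS hBm_GS hT hJ1 k i,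
    isSweep_GS.iterate_le hT (fun i => (hJ1 i).trans (hJ2 i)) (fun i => (hfix i).le) k i⟩

/-- Sandwich corollary: `T^k J ≤ B_m^k J ≤ F^k J ≤ J*`. -/
theorem Bm_sandwich (n m : ℕ) (hm1 : 1 ≤ m) (hmn : m ≤ n)
    (U : Fin n → Finset ℕ) (hU : ∀ i, (U i).Nonempty)
    (p : Fin n → ℕ → Fin n → ℝ) (hp : ∀ i u j, 0 ≤ p i u j)
    (hpsum : ∀ i u, ∑ j : Fin n, p i u j = 1)
    (g : Fin n → ℕ → ℝ) (α : ℝ) (hα0 : 0 < α) (hα1 : α < 1)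
    (Jstar : Fin n → ℝ) (hfix : ∀ i, Bell n U hU p g α Jstar i = Jstar i)
    (J : Fin n → ℝ)
    (hJ1 : ∀ i, J i ≤ Bell n U hU p g α J i)
    (hJ2 : ∀ i, Bell n U hU p g α J i ≤ Jstar i)
    (k : ℕ) (hk : 1 ≤ k) :
    ∀ i, (Bell n U hU p g α)^[k] J i ≤ (Bm n m U hU p g α)^[k] J i ∧
      (Bm n m U hU p g α)^[k] J i ≤ (GS n U hU p g α)^[k] J i ∧
      (GS n U hU p g α)^[k] J i ≤ Jstar i :=
  Bm_sandwich_general n m U hU p hp g α hα0 Jstar hfix J hJ1 hJ2 k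
end
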